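/- Let E be a real inner product space, let ξ ∈ E with ‖ξ‖ = 1, let δ(t) = tanh(t/2)·ξ for t ≥ 0, and let z ∈ E with ‖z‖ < 1. Then the function t ↦ d_B(z, δ(t)) − t tends to log(‖z − ξ‖² / (1 − ‖z‖²)) as t → ∞. (That is, the Busemann function of the Poincaré ball associated to the boundary point ξ is B_ξ(z) = −log((1 − ‖z‖²)/‖z − ξ‖²).) -/

import Mathlib

open Filter

/-- The inverse hyperbolic cosine `arcosh x = log (x + √(x² − 1))`. -/
noncomputable def arcosh (x : ℝ) : ℝ := Real.log (x + Real.sqrt (x ^ 2 - 1))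

/-- The Poincaré distance on the open unit ball of a real inner product space:
`d_B(x, y) = arcosh (1 + 2‖x − y‖² / ((1 − ‖x‖²)(1 − ‖y‖²)))`. -/
noncomputable def poincareDist {E : Type*} [NormedAddCommGroup E]
    [InnerProductSpace ℝ E] (x y : E) : ℝ :=
  arcosh (1 + 2 * ‖x - y‖ ^ 2 / ((1 - ‖x‖ ^ 2) * (1 - ‖y‖ ^ 2)))

private theorem tanh_eq_aux (x : ℝ) :
    Real.tanh x = (1 - Real.exp (-x) ^ 2) / (1 + Real.exp (-x) ^ 2) := by
  rw [Real.tanh_eq_sinh_div_cosh, Real.sinh_eq, Real.cosh_eq, Real.exp_neg]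
  have h := Real.exp_pos x
  field_simp

private theorem tendsto_tanh_aux : Tendsto Real.tanh atTop (nhds 1) := by
  have h : Tendsto (fun x : ℝ => (1 - Real.exp (-x) ^ 2) / (1 + Real.exp (-x) ^ 2)) atTop
      (nhds ((1 - 0 ^ 2) / (1 + 0 ^ 2))) := by
    apply Tendsto.div
    · exact tendsto_const_nhds.sub (Real.tendsto_exp_neg_atTop_nhds_zero.pow 2)
    · exact tendsto_const_nhds.add (Real.tendsto_exp_neg_atTop_nhds_zero.pow 2)
    · norm_num
  simpa using h.congr fun x => (tanh_eq_aux x).symm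

private theorem tanh_sq_lt_one_aux (x : ℝ) : Real.tanh x ^ 2 < 1 := by
  rw [tanh_eq_aux, div_pow, div_lt_one (by positivity)]
  have h : 0 < Real.exp (-x) ^ 2 := by positivity
  nlinarith

/-- Let `E` be a real inner product space, `ξ ∈ E` with `‖ξ‖ = 1`,
`δ t = tanh (t/2) • ξ`, and `z ∈ E` with `‖z‖ < 1`.  Then
`t ↦ d_B(z, δ t) − t` tends to `log (‖z − ξ‖² / (1 − ‖z‖²))` as `t → ∞`; i.e. the
Busemann function of the Poincaré ball at the boundary point `ξ` is
`B_ξ(z) = −log ((1 − ‖z‖²) / ‖z − ξ‖²)`. -/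
theorem poincare_busemann {E : Type*} [NormedAddCommGroup E]
    [InnerProductSpace ℝ E] (ξ : E) (hξ : ‖ξ‖ = 1) (z : E) (hz : ‖z‖ < 1) :
    Tendsto (fun t : ℝ => poincareDist z (Real.tanh (t / 2) • ξ) - t) atTop
      (nhds (Real.log (‖z - ξ‖ ^ 2 / (1 - ‖z‖ ^ 2)))) := by
  have hz2 : (0:ℝ) < 1 - ‖z‖ ^ 2 := by nlinarith [norm_nonneg z]
  have hzξ : z ≠ ξ := fun h => by rw [h, hξ] at hz; exact lt_irrefl 1 hz
  have hnz : (0:ℝ) < ‖z - ξ‖ ^ 2 := by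
    have := norm_pos_iff.mpr (sub_ne_zero.mpr hzξ)
    positivity
  set L : ℝ := ‖z - ξ‖ ^ 2 / (1 - ‖z‖ ^ 2) with hLdef
  have hL : 0 < L := div_pos hnz hz2
  -- the function X t (argument of arcosh) and f t = X t * exp (-t)
  set X : ℝ → ℝ := fun t => 1 + 2 * ‖z - Real.tanh (t / 2) • ξ‖ ^ 2 /
      ((1 - ‖z‖ ^ 2) * (1 - Real.tanh (t / 2) ^ 2)) with hXdef
  set f : ℝ → ℝ := fun t => X t * Real.exp (-t) with hfdef
  have hden : ∀ t : ℝ, 0 < (1 - ‖z‖ ^ 2) * (1 - Real.tanh (t / 2) ^ 2) := fun t =>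
    mul_pos hz2 (by linarith [tanh_sq_lt_one_aux (t / 2)])
  have hX1 : ∀ t : ℝ, 1 ≤ X t := fun t =>
    le_add_of_nonneg_right (div_nonneg (by positivity) (hden t).le)
  -- f tends to L / 2
  have hf : Tendsto f atTop (nhds (L / 2)) := by
    have hfeq : ∀ t : ℝ, f t = Real.exp (-t) +
        2 * ‖z - Real.tanh (t / 2) • ξ‖ ^ 2 / (1 - ‖z‖ ^ 2) *
          ((1 + Real.exp (-t)) / 2) ^ 2 := by
      intro t
      have hc : ((1 + Real.exp (-t)) / 2) ^ 2 = Real.exp (-t) / (1 - Real.tanh (t / 2) ^ 2) := by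
        have h1 : 1 - Real.tanh (t / 2) ^ 2 =
            4 * Real.exp (-(t/2)) ^ 2 / (1 + Real.exp (-(t/2)) ^ 2) ^ 2 := by
          rw [tanh_eq_aux, div_pow]
          have h2 : (0:ℝ) < (1 + Real.exp (-(t/2)) ^ 2) ^ 2 := by positivity
          field_simp
          ring
        have he : Real.exp (-t) = Real.exp (-(t/2)) ^ 2 := by
          rw [← Real.exp_nat_mul]
          norm_num
          ring
        rw [h1, he]
        have h3 : (0:ℝ) < Real.exp (-(t/2)) ^ 2 := by positivity
        field_simp
        ring
      simp only [hfdef, hXdef]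
      rw [add_mul, one_mul, hc]
      have h4 := (hden t)
      have h5 : (0:ℝ) < 1 - Real.tanh (t / 2) ^ 2 := by
        linarith [tanh_sq_lt_one_aux (t / 2)]
      field_simp
    have h1 : Tendsto (fun t : ℝ => Real.exp (-t)) atTop (nhds 0) :=
      Real.tendsto_exp_neg_atTop_nhds_zero
    have htanh : Tendsto (fun t : ℝ => Real.tanh (t / 2)) atTop (nhds 1) :=
      tendsto_tanh_aux.comp (tendsto_id.atTop_div_const two_pos)
    have hnorm : Tendsto (fun t : ℝ => ‖z - Real.tanh (t / 2) • ξ‖ ^ 2) atTop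
        (nhds (‖z - ξ‖ ^ 2)) := by
      have : Tendsto (fun t : ℝ => z - Real.tanh (t / 2) • ξ) atTop (nhds (z - (1:ℝ) • ξ)) :=
        tendsto_const_nhds.sub (htanh.smul_const ξ)
      rw [one_smul] at this
      exact ((continuous_norm.tendsto _).comp this).pow 2
    have : Tendsto (fun t : ℝ => Real.exp (-t) +
        2 * ‖z - Real.tanh (t / 2) • ξ‖ ^ 2 / (1 - ‖z‖ ^ 2) *
          ((1 + Real.exp (-t)) / 2) ^ 2) atTop
        (nhds (0 + 2 * ‖z - ξ‖ ^ 2 / (1 - ‖z‖ ^ 2) * ((1 + 0) / 2) ^ 2)) := by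
      exact h1.add (((hnorm.const_mul 2).div_const _).mul
        (((tendsto_const_nhds.add h1).div_const 2).pow 2))
    have hval : 0 + 2 * ‖z - ξ‖ ^ 2 / (1 - ‖z‖ ^ 2) * (((1:ℝ) + 0) / 2) ^ 2 = L / 2 := by
      rw [hLdef]; ring
    rw [hval] at this
    exact this.congr fun t => (hfeq t).symm
  -- rewrite poincareDist z (δ t) - t
  have key : ∀ t : ℝ, poincareDist z (Real.tanh (t / 2) • ξ) - t
      = Real.log (f t + Real.sqrt (f t ^ 2 - Real.exp (-t) ^ 2)) := by
    intro t
    have hns : ‖Real.tanh (t / 2) • ξ‖ ^ 2 = Real.tanh (t / 2) ^ 2 := by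
      rw [norm_smul, hξ, mul_one, Real.norm_eq_abs, sq_abs]
    have hXt := hX1 t
    have hXpos : (0:ℝ) < X t := lt_of_lt_of_le one_pos hXt
    have hsq : (0:ℝ) ≤ X t ^ 2 - 1 := by nlinarith
    have hpos : (0:ℝ) < X t + Real.sqrt (X t ^ 2 - 1) := by positivity
    have hexp : (0:ℝ) < Real.exp (-t) := Real.exp_pos _
    have lhs_eq : poincareDist z (Real.tanh (t / 2) • ξ) =
        Real.log (X t + Real.sqrt (X t ^ 2 - 1)) := by
      rw [poincareDist, hns, arcosh]
    rw [lhs_eq]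
    have h2 : Real.log (f t + Real.sqrt (f t ^ 2 - Real.exp (-t) ^ 2)) =
        Real.log ((X t + Real.sqrt (X t ^ 2 - 1)) * Real.exp (-t)) := by
      congr 1
      have hs : Real.sqrt (f t ^ 2 - Real.exp (-t) ^ 2) =
          Real.sqrt (X t ^ 2 - 1) * Real.exp (-t) := by
        have : f t ^ 2 - Real.exp (-t) ^ 2 = (X t ^ 2 - 1) * Real.exp (-t) ^ 2 := by
          simp only [hfdef]; ring
        rw [this, Real.sqrt_mul hsq, Real.sqrt_sq hexp.le]
      rw [hs, hfdef]; ring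
    rw [h2, Real.log_mul (ne_of_gt hpos) (ne_of_gt hexp), Real.log_exp]
    ring
  -- conclude
  have hin : Tendsto (fun t : ℝ => f t + Real.sqrt (f t ^ 2 - Real.exp (-t) ^ 2)) atTop
      (nhds L) := by
    have h1 : Tendsto (fun t : ℝ => f t ^ 2 - Real.exp (-t) ^ 2) atTop
        (nhds ((L / 2) ^ 2 - 0 ^ 2)) :=
      (hf.pow 2).sub (Real.tendsto_exp_neg_atTop_nhds_zero.pow 2)
    have h2 : Tendsto (fun t : ℝ => Real.sqrt (f t ^ 2 - Real.exp (-t) ^ 2)) atTop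
        (nhds (Real.sqrt ((L / 2) ^ 2 - 0 ^ 2))) :=
      (Real.continuous_sqrt.tendsto _).comp h1
    have h3 : Real.sqrt ((L / 2) ^ 2 - 0 ^ 2) = L / 2 := by
      rw [show (L / 2) ^ 2 - (0:ℝ) ^ 2 = (L / 2) ^ 2 by ring, Real.sqrt_sq (by positivity)]
    rw [h3] at h2
    have := hf.add h2
    rwa [add_halves] at this
  have hfin := hin.log (ne_of_gt hL)
  exact Tendsto.congr (fun t => (key t).symm) hfin
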